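/- Let d ≥ 1 and let ρ be a probability measure on ℝ^d. Let M be a d×d symmetric positive semi-definite matrix that is not invertible and let x ∈ ℝ^d. Then I(x, M) ≥ −ln ρ(Ker(M)^⊥), where Ker(M)^⊥ is the orthogonal complement of the kernel of M in ℝ^d. -/

import Mathlib

open MeasureTheory Filter Matrix Real

noncomputable section

/-- `T_n(x) = ∑ i, x_i ᵗx_i`. -/
def Tmat (d n : ℕ) (x : Fin n → Fin d → ℝ) : Matrix (Fin d) (Fin d) ℝ :=
  ∑ i, Matrix.vecMulVec (x i) (x i)

/-- `S_n(x) = x_1 + … + x_n`. -/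
def Svec (d n : ℕ) (x : Fin n → Fin d → ℝ) : Fin d → ℝ := ∑ i, x i

/-- the Hamiltonian `(1/2)⟨T_n⁻¹ S_n, S_n⟩`. -/
def Hfun (d n : ℕ) (x : Fin n → Fin d → ℝ) : ℝ :=
  (1 / 2) * dotProduct ((Tmat d n x)⁻¹.mulVec (Svec d n x)) (Svec d n x)

/-- normalization constant `Z_n`. -/
def Zconst (d : ℕ) (ρ : Measure (Fin d → ℝ)) (n : ℕ) : ℝ :=
  ∫ x : Fin n → Fin d → ℝ,
    Set.indicator {x | 0 < (Tmat d n x).det} (fun x => Real.exp (Hfun d n x)) x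
    ∂ Measure.pi fun _ => ρ

/-- the Curie-Weiss model of SOC `μ̃_{n,ρ}`. -/
def CW (d : ℕ) (ρ : Measure (Fin d → ℝ)) (n : ℕ) : Measure (Fin n → Fin d → ℝ) :=
  (Measure.pi fun _ => ρ).withDensity fun x =>
    Set.indicator {x | 0 < (Tmat d n x).det}
      (fun x => ENNReal.ofReal (Real.exp (Hfun d n x) / Zconst d ρ n)) x

/-- covariance matrix `Σ = ∫ z ᵗz dρ(z)`. -/
def covM (d : ℕ) (ρ : Measure (Fin d → ℝ)) : Matrix (Fin d) (Fin d) ℝ :=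
  Matrix.of fun i j => ∫ z, z i * z j ∂ρ

/-- `M₄(z) = ∑ (∫ yᵢyⱼyₖyₗ dρ) zᵢzⱼzₖzₗ`. -/
def M4 (d : ℕ) (ρ : Measure (Fin d → ℝ)) (z : Fin d → ℝ) : ℝ :=
  ∑ i : Fin d, ∑ j : Fin d, ∑ k : Fin d, ∑ l : Fin d,
    (∫ y, y i * y j * y k * y l ∂ρ) * (z i * z j * z k * z l)

/-- symmetric measure: invariant under `z ↦ -z`. -/
def SymMeas (d : ℕ) (ρ : Measure (Fin d → ℝ)) : Prop := ρ.map (fun z => -z) = ρ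

/-- condition `(*)` : some Gaussian exponential moment. -/
def CondStar (d : ℕ) (ρ : Measure (Fin d → ℝ)) : Prop :=
  ∃ v₀ > (0:ℝ), Integrable (fun z => Real.exp (v₀ * dotProduct z z)) ρ

/-- the ρ-measure of every vector hyperplane is `< 1/√e`. -/
def HypLt (d : ℕ) (ρ : Measure (Fin d → ℝ)) : Prop :=
  ∀ s : Fin d → ℝ, s ≠ 0 →
    ρ {z | dotProduct s z = 0} < ENNReal.ofReal (1 / Real.sqrt (Real.exp 1))

/-- non-degeneracy: the ρ-measure of every affine hyperplane is `< 1`. -/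
def NonDeg (d : ℕ) (ρ : Measure (Fin d → ℝ)) : Prop :=
  ∀ s : Fin d → ℝ, s ≠ 0 → ∀ c : ℝ, ρ {z | dotProduct s z = c} < 1

-- positive square root of a positive semi-definite matrix (junk value otherwise).
open scoped Classical in
def psqrt (d : ℕ) (M : Matrix (Fin d) (Fin d) ℝ) : Matrix (Fin d) (Fin d) ℝ :=
  if h : M.PosSemidef then
    h.1.eigenvectorUnitary.1 * diagonal ((RCLike.ofReal : ℝ → ℝ) ∘ Real.sqrt ∘ h.1.eigenvalues) *
      (star h.1.eigenvectorUnitary : Matrix (Fin d) (Fin d) ℝ)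
  else 0

/-- Euclidean norm on `ℝ^d`. -/
def vnorm (d : ℕ) (v : Fin d → ℝ) : ℝ := Real.sqrt (dotProduct v v)

/-- Frobenius norm on `d × d` matrices. -/
def mnorm (d : ℕ) (M : Matrix (Fin d) (Fin d) ℝ) : ℝ :=
  Real.sqrt (∑ i : Fin d, ∑ j : Fin d, (M i j) ^ 2)

/-- the log-Laplace transform `Λ` of `(Z, Z ᵗZ)`, with values in `(-∞, +∞]`. -/
def Lam (d : ℕ) (ρ : Measure (Fin d → ℝ)) (u : Fin d → ℝ)
    (A : Matrix (Fin d) (Fin d) ℝ) : EReal :=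
  ENNReal.log (∫⁻ z, ENNReal.ofReal
    (Real.exp (dotProduct u z + dotProduct (A.mulVec z) z)) ∂ρ)

/-- the Cramér transform `I` of `(Z, Z ᵗZ)`. -/
def CramerI (d : ℕ) (ρ : Measure (Fin d → ℝ)) (x : Fin d → ℝ)
    (M : Matrix (Fin d) (Fin d) ℝ) : EReal :=
  ⨆ p : (Fin d → ℝ) × {A : Matrix (Fin d) (Fin d) ℝ // A.IsSymm},
    ((dotProduct x p.1 + (M * (p.2 : Matrix (Fin d) (Fin d) ℝ)).trace : ℝ) : EReal)
      - Lam d ρ p.1 p.2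

end

/-! Take `u = 0` and `A = -n N` with `N = ∑ bᵢ bᵢᵀ` for a basis `(bᵢ)` of `Ker M`. Since
`M N = 0` the trace term vanishes, so `I(x, M) ≥ -ln ∫ exp (-n ∑ ⟨bᵢ, z⟩²) dρ(z)`, and by dominated
convergence these integrals tend to `ρ {z | ⟨bᵢ, z⟩ = 0 for all i} = ρ (Ker(M)^⊥)`. -/

open Topology

namespace Matrix

variable {n ι R : Type*} [Fintype ι] [CommRing R] (v : ι → n → R)

theorem isSymm_sum_vecMulVec_self : (∑ i, vecMulVec (v i) (v i)).IsSymm := by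
  simp [IsSymm, transpose_sum]

theorem sum_vecMulVec_self_mulVec_dotProduct [Fintype n] (z : n → R) :
    (∑ i, vecMulVec (v i) (v i)) *ᵥ z ⬝ᵥ z = ∑ i, (v i ⬝ᵥ z) ^ 2 := by
  simp [sum_mulVec, vecMulVec_mulVec, sum_dotProduct, sq]

theorem mul_sum_vecMulVec_self_eq_zero [Fintype n] {m : Type*} {M : Matrix m n R}
    (hv : ∀ i, M *ᵥ v i = 0) : M * ∑ i, vecMulVec (v i) (v i) = 0 := by
  simp only [Matrix.mul_sum, mul_vecMulVec, hv, zero_vecMulVec, Finset.sum_const_zero]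

end Matrix

theorem Module.Basis.dotProduct_eq_zero {n ι R : Type*} [Fintype n] [CommRing R]
    {W : Submodule R (n → R)} (b : Module.Basis ι R W) {z : n → R}
    (hz : ∀ i, (b i : n → R) ⬝ᵥ z = 0) {y : n → R} (hy : y ∈ W) : y ⬝ᵥ z = 0 := by
  have : ((dotProductBilin R R).flip z).domRestrict W = 0 := b.ext fun i => by simpa using hz i
  simpa using LinearMap.congr_fun this ⟨y, hy⟩

theorem tendsto_lintegral_ofReal_exp_neg_mul {α : Type*} [MeasurableSpace α] (μ : Measure α)
    [IsFiniteMeasure μ] {q : α → ℝ} (hq : Measurable q) (hq0 : ∀ z, 0 ≤ q z) :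
    Tendsto (fun n : ℕ => ∫⁻ z, ENNReal.ofReal (exp (-n * q z)) ∂μ) atTop
      (𝓝 (μ {z | q z = 0})) := by
  have hlim (z : α) : Tendsto (fun n : ℕ => ENNReal.ofReal (exp (-n * q z))) atTop
      (𝓝 ({z | q z = 0}.indicator 1 z)) := by
    rcases (hq0 z).eq_or_lt with hz | hz
    · simp [← hz]
    · rw [Set.indicator_of_notMem (show z ∉ {z | q z = 0} from hz.ne'), ← ENNReal.ofReal_zero]
      refine ENNReal.tendsto_ofReal (tendsto_exp_atBot.comp ?_)
      simpa only [neg_mul, Function.comp_def] using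
        tendsto_neg_atTop_atBot.comp (tendsto_natCast_atTop_atTop.atTop_mul_const hz)
  have hbound (n : ℕ) (z : α) : ENNReal.ofReal (exp (-n * q z)) ≤ 1 := by
    rw [ENNReal.ofReal_le_one, exp_le_one_iff]
    exact mul_nonpos_of_nonpos_of_nonneg (by simp) (hq0 z)
  rw [← lintegral_indicator_one (measurableSet_eq_fun hq measurable_const)]
  exact tendsto_lintegral_of_dominated_convergence 1
    (fun n => (measurable_const.mul hq).exp.ennreal_ofReal) (fun n => ae_of_all _ (hbound n))
    (by simp) (ae_of_all _ hlim)

theorem lam_zero_smul {d : ℕ} (ρ : Measure (Fin d → ℝ)) (t : ℝ) (A : Matrix (Fin d) (Fin d) ℝ) :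
    Lam d ρ 0 (t • A) = ENNReal.log (∫⁻ z, ENNReal.ofReal (exp (t * (A *ᵥ z ⬝ᵥ z))) ∂ρ) := by
  simp only [Lam, zero_dotProduct, zero_add, smul_mulVec, smul_dotProduct, smul_eq_mul]

theorem neg_lam_zero_le_cramerI {d : ℕ} (ρ : Measure (Fin d → ℝ)) (x : Fin d → ℝ)
    {M A : Matrix (Fin d) (Fin d) ℝ} (hA : A.IsSymm) (hMA : (M * A).trace = 0) :
    -Lam d ρ 0 A ≤ CramerI d ρ x M :=
  le_iSup_of_le ((0, ⟨A, hA⟩) : (Fin d → ℝ) × {A : Matrix (Fin d) (Fin d) ℝ // A.IsSymm})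
    (by simp [hMA])

theorem cramerI_ge_neg_log_kernel_perp_general
    (d : ℕ) (ρ : Measure (Fin d → ℝ)) [IsProbabilityMeasure ρ]
    (M : Matrix (Fin d) (Fin d) ℝ)
    (x : Fin d → ℝ) :
    -(ENNReal.log (ρ {z | ∀ y : Fin d → ℝ, M.mulVec y = 0 → dotProduct y z = 0}))
      ≤ CramerI d ρ x M := by
  let b := Module.finBasis ℝ (LinearMap.ker M.mulVecLin)
  let v i : Fin d → ℝ := b i
  let q z := ∑ i, (v i ⬝ᵥ z) ^ 2
  have hle (n : ℕ) :
      -ENNReal.log (∫⁻ z, ENNReal.ofReal (exp (-n * q z)) ∂ρ) ≤ CramerI d ρ x M := by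
    have hMN : M * ∑ i, vecMulVec (v i) (v i) = 0 :=
      mul_sum_vecMulVec_self_eq_zero v fun i => (b i).2
    have h := neg_lam_zero_le_cramerI ρ x ((isSymm_sum_vecMulVec_self v).smul (-n : ℝ))
      (by rw [Matrix.mul_smul, hMN, smul_zero, trace_zero])
    simpa only [lam_zero_smul, sum_vecMulVec_self_mulVec_dotProduct] using h
  have hlim := ((continuous_neg.tendsto _).comp (ENNReal.continuous_log.tendsto _)).comp
    (tendsto_lintegral_ofReal_exp_neg_mul ρ (q := q) (by fun_prop) fun z => by positivity)
  have hsub : {z | q z = 0} ⊆ {z | ∀ y, M *ᵥ y = 0 → y ⬝ᵥ z = 0} := by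
    intro z hz y hy
    have hsq := (Fintype.sum_eq_zero_iff_of_nonneg fun i => sq_nonneg (v i ⬝ᵥ z)).mp hz
    exact b.dotProduct_eq_zero (fun i => pow_eq_zero_iff two_ne_zero |>.mp (congrFun hsq i)) hy
  calc _ ≤ -ENNReal.log (ρ {z | q z = 0}) :=
        EReal.neg_le_neg_iff.mpr (ENNReal.log_monotone (measure_mono hsub))
    _ ≤ CramerI d ρ x M := le_of_tendsto' hlim hle

/-- if `M` is positive semi-definite and not invertible then
`I(x,M) ≥ -ln ρ(Ker(M)^⊥)`. -/
theorem cramerI_ge_neg_log_kernel_perp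
    (d : ℕ) (hd : 1 ≤ d) (ρ : Measure (Fin d → ℝ)) [IsProbabilityMeasure ρ]
    (M : Matrix (Fin d) (Fin d) ℝ) (hM : M.PosSemidef) (hMni : ¬ IsUnit M)
    (x : Fin d → ℝ) :
    -(ENNReal.log (ρ {z | ∀ y : Fin d → ℝ, M.mulVec y = 0 → dotProduct y z = 0}))
      ≤ CramerI d ρ x M :=
  cramerI_ge_neg_log_kernel_perp_general d ρ M x
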